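/- If G and H are graphs that both have clique number exactly two and are not both cliques (i.e., not both equal to K_2), then the mobile general position number of their join satisfies mob(G ∨ H) = 3. -/

import Mathlib

open SimpleGraph

/-- `S` is a general position set of `G`: for all `u, v ∈ S`, every shortest `u,v`-path
contains no vertex of `S` other than `u` and `v`. -/
def IsGPSet {V : Type*} (G : SimpleGraph V) (S : Set V) : Prop :=
  ∀ u ∈ S, ∀ v ∈ S, ∀ p : G.Walk u v, p.IsPath → p.length = G.dist u v →
    ∀ w ∈ p.support, w ∈ S → w = u ∨ w = v

/-- A legal move from the configuration `S` to the configuration `T`: a robot at `u ∈ S`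
moves to an adjacent unoccupied vertex `v ∉ S` so that the resulting configuration
`(S \ {u}) ∪ {v}` is again a general position set. -/
def LegalMove {V : Type*} (G : SimpleGraph V) (S T : Set V) : Prop :=
  IsGPSet G S ∧ ∃ u ∈ S, ∃ v, v ∉ S ∧ G.Adj u v ∧
    T = insert v (S \ {u}) ∧ IsGPSet G T

/-- `S` is a mobile general position set: there is a finite sequence of configurations
`S = S_0, S_1, …, S_k`, each obtained from the previous one by a legal move, whose union
is the whole vertex set. -/
def IsMobileGPSet {V : Type*} (G : SimpleGraph V) (S : Set V) : Prop :=
  IsGPSet G S ∧ ∃ (k : ℕ) (f : ℕ → Set V), f 0 = S ∧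
    (∀ i < k, LegalMove G (f i) (f (i + 1))) ∧
    (⋃ i ∈ Set.Iic k, f i) = Set.univ

/-- The mobile general position number of `G`: the maximum cardinality of a mobile
general position set. -/
noncomputable def mob {V : Type*} (G : SimpleGraph V) : ℕ :=
  sSup {n | ∃ S : Set V, IsMobileGPSet G S ∧ S.ncard = n}

/-- The join `G ∨ H` of two graphs: the disjoint union of `G` and `H` together with all
edges between `V(G)` and `V(H)`. -/
def joinGraph {α β : Type*} (G : SimpleGraph α) (H : SimpleGraph β) : SimpleGraph (α ⊕ β) :=
  SimpleGraph.fromRel (fun x y =>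
    (∃ a b, x = Sum.inl a ∧ y = Sum.inl b ∧ G.Adj a b) ∨
    (∃ a b, x = Sum.inr a ∧ y = Sum.inr b ∧ H.Adj a b) ∨
    (x.isLeft ∧ y.isRight))

/-!
The join has diameter two, so a set is in general position iff none of its vertices is a common
neighbour of two non-adjacent ones. A general position set meeting both sides is therefore a
clique on each side, and has at most `2 + 2` vertices. If it has four, no legal move `S → T` is
possible: the sides of `S ∪ T` would still be cliques, while `S ∪ T` has five vertices. So a mobile
set of size at least four either never moves (then it is everything and `G = H = K₂`), or stays on
one side for ever and never covers the other.

Conversely, for edges `ab` of `G` and `cd` of `H`, the configuration `{a, b, c}` is mobile: the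
robot at `c` can walk through the component of `c` in `H`; after moving `a` to `d`, the robot at
`b` can walk through the component of `b` in `G`. A vertex outside these components is
non-adjacent to `a, b` (resp. `c, d`) and is reached in one more move.
-/

open Set Relation

section Join
variable {α β : Type*} {G : SimpleGraph α} {H : SimpleGraph β}

@[simp]
lemma joinGraph_adj_inl_inl {a b : α} :
    (joinGraph G H).Adj (.inl a) (.inl b) ↔ G.Adj a b := by
  simpa [joinGraph, G.adj_comm b a] using G.ne_of_adj

@[simp]
lemma joinGraph_adj_inr_inr {a b : β} :
    (joinGraph G H).Adj (.inr a) (.inr b) ↔ H.Adj a b := by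
  simpa [joinGraph, H.adj_comm b a] using H.ne_of_adj

@[simp]
lemma joinGraph_adj_inl_inr {a : α} {b : β} : (joinGraph G H).Adj (.inl a) (.inr b) := by
  simp [joinGraph]

@[simp]
lemma joinGraph_adj_inr_inl {a : α} {b : β} : (joinGraph G H).Adj (.inr b) (.inl a) :=
  joinGraph_adj_inl_inr.symm

end Join

section GeneralPosition
variable {V : Type*} {J : SimpleGraph V} {S : Set V}

lemma IsGPSet.adj_of_adj_of_adj (hS : IsGPSet J S) {u v w : V} (hu : u ∈ S) (hv : v ∈ S)
    (hw : w ∈ S) (huv : u ≠ v) (huw : J.Adj u w) (hwv : J.Adj w v) : J.Adj u v := by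
  by_contra hnadj
  have hdist : J.dist u v = 2 := by
    have := J.dist_le (.cons huw (.cons hwv .nil))
    have := (Walk.cons huw (.cons hwv .nil)).reachable.one_lt_dist_of_ne_of_not_adj huv hnadj
    simp only [Walk.length_cons, Walk.length_nil] at *
    omega
  have hpath : (Walk.cons huw (.cons hwv .nil)).IsPath := by
    simp [huv, huw.ne, hwv.ne]
  rcases hS u hu v hv _ hpath (by simp [hdist]) w (by simp) hw with rfl | rfl
  · exact J.irrefl huw
  · exact J.irrefl hwv

lemma dist_add_dist_le_of_mem_support {u v w : V} (p : J.Walk u v)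
    (hp : p.length = J.dist u v) (hw : w ∈ p.support) :
    J.dist u w + J.dist w v ≤ J.dist u v := by
  classical
  have := congrArg Walk.length (p.take_spec hw)
  rw [Walk.length_append] at this
  have := J.dist_le (p.takeUntil w hw)
  have := J.dist_le (p.dropUntil w hw)
  omega

lemma SimpleGraph.IsClique.isGPSet (hS : J.IsClique S) : IsGPSet J S := by
  classical
  intro u hu v hv p _ hp w hwp _
  by_contra! hw
  have := dist_add_dist_le_of_mem_support p hp hwp
  have := (p.takeUntil w hwp).reachable.pos_dist_of_ne hw.1.symm
  have := (p.dropUntil w hwp).reachable.pos_dist_of_ne hw.2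
  have : J.dist u v ≤ 1 := by
    obtain rfl | huv := eq_or_ne u v
    · simp
    · exact (dist_eq_one_iff_adj.mpr (hS hu hv huv)).le
  omega

lemma isGPSet_of_ediam_le_two (hJ : J.ediam ≤ 2)
    (hS : ∀ u ∈ S, ∀ v ∈ S, ∀ w ∈ S, u ≠ v → J.Adj u w → J.Adj w v → J.Adj u v) :
    IsGPSet J S := by
  classical
  intro u hu v hv p _ hp w hwp hw
  by_contra! hwuv
  have hsplit := dist_add_dist_le_of_mem_support p hp hwp
  have huw := (p.takeUntil w hwp).reachable.pos_dist_of_ne hwuv.1.symm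
  have hwv := (p.dropUntil w hwp).reachable.pos_dist_of_ne hwuv.2
  have hle : J.dist u v ≤ 2 := by
    have := J.edist_le_ediam (u := u) (v := v)
    rw [← p.reachable.coe_dist_eq_edist] at this
    exact_mod_cast this.trans hJ
  have huv : u ≠ v := by rintro rfl; rw [dist_self] at hsplit; omega
  have hadj := hS u hu v hv w hw huv (dist_eq_one_iff_adj.mp (by omega))
    (dist_eq_one_iff_adj.mp (by omega))
  have := dist_eq_one_iff_adj.mpr hadj
  omega

end GeneralPosition

section Clique
variable {α : Type*} {G : SimpleGraph α}

lemma SimpleGraph.exists_adj_of_one_lt_cliqueNum (hG : 1 < G.cliqueNum) : ∃ a b, G.Adj a b := by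
  obtain ⟨s, hs⟩ := G.exists_isNClique_cliqueNum
  obtain ⟨a, ha, b, hb, hab⟩ := Finset.one_lt_card.mp (hs.card_eq ▸ hG)
  exact ⟨a, b, hs.isClique ha hb hab⟩

lemma SimpleGraph.IsClique.ncard_le_cliqueNum [Finite α] {s : Set α} (h : G.IsClique s) :
    s.ncard ≤ G.cliqueNum := by
  rw [ncard_eq_toFinset_card s]
  exact IsClique.card_le_cliqueNum (tc := by simpa using h)

end Clique

lemma Set.ncard_preimage_inl_add_ncard_preimage_inr {α β : Type*} [Finite α] [Finite β]
    (S : Set (α ⊕ β)) : (Sum.inl ⁻¹' S).ncard + (Sum.inr ⁻¹' S).ncard = S.ncard := by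
  conv_rhs => rw [← image_preimage_inl_union_image_preimage_inr S]
  rw [ncard_union_eq disjoint_image_inl_image_inr,
    ncard_image_of_injective _ Sum.inl_injective, ncard_image_of_injective _ Sum.inr_injective]

section Embedding
variable {V W : Type*} {J : SimpleGraph V} {K : SimpleGraph W} {S T : Set V}

lemma IsGPSet.isClique_preimage (e : K ↪g J) (hS : IsGPSet J S) {w : V} (hw : w ∈ S)
    (hadj : ∀ x, J.Adj (e x) w) : K.IsClique (e ⁻¹' S) := fun x hx y hy hxy =>
  e.map_adj_iff.mp (hS.adj_of_adj_of_adj hx hy hw (e.injective.ne hxy) (hadj x) (hadj y).symm)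

/-- The only pair of `S ∪ T` that is neither in `S` nor in `T` is the pair of the move. -/
lemma LegalMove.isClique_preimage_union (e : K ↪g J) (hST : LegalMove J S T)
    (hS : K.IsClique (e ⁻¹' S)) (hT : K.IsClique (e ⁻¹' T)) : K.IsClique (e ⁻¹' (S ∪ T)) := by
  obtain ⟨-, u, -, v, -, huv, rfl, -⟩ := hST
  have hcross : ∀ x ∈ e ⁻¹' S, ∀ y ∈ e ⁻¹' insert v (S \ {u}), x ≠ y → K.Adj x y := by
    intro x hx y hy hxy
    by_cases hxT : e x ∈ insert v (S \ {u})
    · exact hT hxT hy hxy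
    by_cases hyS : e y ∈ S
    · exact hS hx hyS hxy
    have hxu : e x = u := by_contra fun h => hxT (mem_insert_of_mem _ ⟨hx, h⟩)
    have hyv : e y = v := by simpa [hyS] using hy
    exact e.map_adj_iff.mp (hxu ▸ hyv ▸ huv)
  rintro x (hx | hx) y (hy | hy) hxy
  · exact hS hx hy hxy
  · exact hcross x hx y hy hxy
  · exact (hcross y hy x hx hxy.symm).symm
  · exact hT hx hy hxy

end Embedding

section LegalMove
variable {V : Type*} {J : SimpleGraph V} {S T : Set V}

lemma LegalMove.symm (h : LegalMove J S T) : LegalMove J T S := by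
  obtain ⟨hS, u, hu, v, hv, huv, rfl, hT⟩ := h
  refine ⟨hT, v, mem_insert _ _, u, ?_, huv.symm, ?_, hS⟩
  · simpa using huv.ne
  · ext x
    by_cases hxu : x = u <;> by_cases hxv : x = v <;> simp_all

lemma LegalMove.ncard_eq [Finite V] (h : LegalMove J S T) : T.ncard = S.ncard := by
  obtain ⟨-, u, hu, v, hv, -, rfl, -⟩ := h
  rw [ncard_insert_of_notMem fun h => hv h.1, ncard_sdiff_singleton_add_one hu]

lemma LegalMove.inter_nonempty (h : LegalMove J S T) (hS : S.Nontrivial) : (S ∩ T).Nonempty := by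
  obtain ⟨-, u, -, v, -, -, rfl, -⟩ := h
  obtain ⟨x, hx, hxu⟩ := hS.exists_ne u
  exact ⟨x, hx, mem_insert_of_mem _ ⟨hx, hxu⟩⟩

instance : Std.Symm (LegalMove J) :=
  ⟨fun _ _ => LegalMove.symm⟩

end LegalMove

lemma apply_eq_of_chain_of_inter_nonempty {X C : Type*} (c : X → C) {f : ℕ → Set X} {k : ℕ}
    (hconst : ∀ i ≤ k, ∀ x ∈ f i, ∀ y ∈ f i, c x = c y)
    (hinter : ∀ i < k, (f i ∩ f (i + 1)).Nonempty) {y : X} (hy : y ∈ f 0) :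
    ∀ i ≤ k, ∀ x ∈ f i, c x = c y := by
  intro i
  induction i with
  | zero => exact fun hk x hx => hconst 0 hk x hx y hy
  | succ i ih =>
    intro hi x hx
    obtain ⟨z, hzi, hzi'⟩ := hinter i (by omega)
    rw [hconst (i + 1) hi x hx z hzi', ih (by omega) z hzi]

section JoinStructure
variable {α β : Type*} {G : SimpleGraph α} {H : SimpleGraph β} {S T : Set (α ⊕ β)}

def SimpleGraph.Embedding.joinInl : G ↪g joinGraph G H :=
  ⟨.inl, joinGraph_adj_inl_inl⟩

def SimpleGraph.Embedding.joinInr : H ↪g joinGraph G H :=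
  ⟨.inr, joinGraph_adj_inr_inr⟩

@[simp]
lemma SimpleGraph.Embedding.coe_joinInl : ⇑(Embedding.joinInl : G ↪g joinGraph G H) = .inl :=
  rfl

@[simp]
lemma SimpleGraph.Embedding.coe_joinInr : ⇑(Embedding.joinInr : H ↪g joinGraph G H) = .inr :=
  rfl

lemma joinGraph_ediam_le_two [Nonempty α] [Nonempty β] : (joinGraph G H).ediam ≤ 2 := by
  refine ediam_le_of_edist_le fun x y => ?_
  have h1 {x y : α ⊕ β} (h : (joinGraph G H).Adj x y) : (joinGraph G H).edist x y ≤ 2 :=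
    (edist_eq_one_iff_adj.mpr h).trans_le one_le_two
  have h2 {x y w : α ⊕ β} (hxw : (joinGraph G H).Adj x w) (hwy : (joinGraph G H).Adj w y) :
      (joinGraph G H).edist x y ≤ 2 := (edist_le (.cons hxw (.cons hwy .nil))).trans_eq rfl
  rcases x with a | b <;> rcases y with a' | b'
  · exact h2 (w := .inr (Classical.arbitrary β)) (by simp) (by simp)
  · exact h1 (by simp)
  · exact h1 (by simp)
  · exact h2 (w := .inl (Classical.arbitrary α)) (by simp) (by simp)

lemma IsGPSet.isClique_preimage_inl (hS : IsGPSet (joinGraph G H) S) {b : β}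
    (hb : .inr b ∈ S) : G.IsClique (Sum.inl ⁻¹' S) :=
  hS.isClique_preimage Embedding.joinInl hb fun _ => joinGraph_adj_inl_inr

lemma IsGPSet.isClique_preimage_inr (hS : IsGPSet (joinGraph G H) S) {a : α}
    (ha : .inl a ∈ S) : H.IsClique (Sum.inr ⁻¹' S) :=
  hS.isClique_preimage Embedding.joinInr ha fun _ => joinGraph_adj_inr_inl

lemma LegalMove.false_of_mem_inl_of_mem_inr [Finite α] [Finite β] (hG : G.cliqueNum = 2)
    (hH : H.cliqueNum = 2) (hST : LegalMove (joinGraph G H) S T) (hS4 : 4 ≤ S.ncard) {a : α}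
    {b : β} (ha : .inl a ∈ S) (hb : .inr b ∈ S) : False := by
  have hS := hST.1
  have hSl := (hS.isClique_preimage_inl hb).ncard_le_cliqueNum
  have hSr := (hS.isClique_preimage_inr ha).ncard_le_cliqueNum
  have hsum := S.ncard_preimage_inl_add_ncard_preimage_inr
  have hSl' : (Sum.inl ⁻¹' S).Nontrivial := one_lt_ncard_iff_nontrivial.mp (by omega)
  have hSr' : (Sum.inr ⁻¹' S).Nontrivial := one_lt_ncard_iff_nontrivial.mp (by omega)
  obtain ⟨-, u, hu, v, hv, -, hTeq, hT⟩ := id hST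
  have hsub : S \ {u} ⊆ T := hTeq ▸ subset_insert _ _
  obtain ⟨_, ⟨a', ha', rfl⟩, ha'u⟩ := (hSl'.image Sum.inl_injective).exists_ne u
  obtain ⟨_, ⟨b', hb', rfl⟩, hb'u⟩ := (hSr'.image Sum.inr_injective).exists_ne u
  have hl : (Sum.inl ⁻¹' (S ∪ T)).ncard ≤ G.cliqueNum :=
    (hST.isClique_preimage_union Embedding.joinInl (hS.isClique_preimage_inl hb)
      (hT.isClique_preimage_inl (hsub ⟨hb', hb'u⟩))).ncard_le_cliqueNum
  have hr : (Sum.inr ⁻¹' (S ∪ T)).ncard ≤ H.cliqueNum :=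
    (hST.isClique_preimage_union Embedding.joinInr (hS.isClique_preimage_inr ha)
      (hT.isClique_preimage_inr (hsub ⟨ha', ha'u⟩))).ncard_le_cliqueNum
  have hunion : (S ∪ T).ncard = S.ncard + 1 := by
    rw [hTeq, union_insert, union_eq_self_of_subset_right sdiff_subset, ncard_insert_of_notMem hv]
  have := (S ∪ T).ncard_preimage_inl_add_ncard_preimage_inr
  omega

end JoinStructure

section UpperBound
variable {α β : Type*} [Finite α] [Finite β] {G : SimpleGraph α} {H : SimpleGraph β}
  {S T : Set (α ⊕ β)}

lemma LegalMove.isLeft_eq (hG : G.cliqueNum = 2) (hH : H.cliqueNum = 2)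
    (hST : LegalMove (joinGraph G H) S T) (hS4 : 4 ≤ S.ncard) {x y : α ⊕ β} (hx : x ∈ S)
    (hy : y ∈ S) : x.isLeft = y.isLeft := by
  rcases x with a | b <;> rcases y with a' | b'
  · rfl
  · exact (hST.false_of_mem_inl_of_mem_inr hG hH hS4 hx hy).elim
  · exact (hST.false_of_mem_inl_of_mem_inr hG hH hS4 hy hx).elim
  · rfl

lemma isLeft_eq_of_legalMove_chain (hG : G.cliqueNum = 2) (hH : H.cliqueNum = 2)
    {f : ℕ → Set (α ⊕ β)} {k : ℕ} (hk : 0 < k)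
    (hmove : ∀ i < k, LegalMove (joinGraph G H) (f i) (f (i + 1))) (hS4 : 4 ≤ (f 0).ncard)
    {y : α ⊕ β} (hy : y ∈ f 0) : ∀ i ≤ k, ∀ x ∈ f i, x.isLeft = y.isLeft := by
  have hcard : ∀ i ≤ k, (f i).ncard = (f 0).ncard := by
    intro i
    induction i with
    | zero => simp
    | succ i ih => exact fun hi => by rw [(hmove i (by omega)).ncard_eq, ih (by omega)]
  have hside : ∀ i ≤ k, ∀ x ∈ f i, ∀ y ∈ f i, x.isLeft = y.isLeft := by
    intro i hi
    obtain hi | rfl := hi.lt_or_eq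
    · exact fun x hx y hy => (hmove i hi).isLeft_eq hG hH (by rw [hcard i hi.le]; omega) hx hy
    · obtain ⟨j, rfl⟩ : ∃ j, i = j + 1 := ⟨i - 1, by omega⟩
      exact fun x hx y hy =>
        (hmove j (by omega)).symm.isLeft_eq hG hH (by rw [hcard _ le_rfl]; omega) hx hy
  have hinter : ∀ i < k, (f i ∩ f (i + 1)).Nonempty := fun i hi =>
    (hmove i hi).inter_nonempty (one_lt_ncard_iff_nontrivial.mp (by rw [hcard i hi.le]; omega))
  exact apply_eq_of_chain_of_inter_nonempty Sum.isLeft hside hinter hy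

lemma IsMobileGPSet.ncard_le_three (hG : G.cliqueNum = 2) (hH : H.cliqueNum = 2)
    (hnot : ¬(G = ⊤ ∧ H = ⊤)) (hS : IsMobileGPSet (joinGraph G H) S) : S.ncard ≤ 3 := by
  obtain ⟨a, -, -⟩ := G.exists_adj_of_one_lt_cliqueNum (by omega)
  obtain ⟨b, -, -⟩ := H.exists_adj_of_one_lt_cliqueNum (by omega)
  obtain ⟨hgp, k, f, rfl, hmove, hcover⟩ := hS
  by_contra! hS4
  obtain rfl | hk := k.eq_zero_or_pos
  · have huniv : f 0 = univ := by simpa using hcover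
    rw [huniv] at hgp
    exact hnot ⟨isClique_univ.mp (hgp.isClique_preimage_inl (b := b) trivial),
      isClique_univ.mp (hgp.isClique_preimage_inr (a := a) trivial)⟩
  obtain ⟨y, hy⟩ := nonempty_of_ncard_ne_zero (by omega : (f 0).ncard ≠ 0)
  have hside := isLeft_eq_of_legalMove_chain hG hH hk hmove hS4 hy
  have hmem : ∀ x, ∃ i ≤ k, x ∈ f i := by simpa [eq_univ_iff_forall] using hcover
  obtain ⟨i, hi, hai⟩ := hmem (.inl a)
  obtain ⟨j, hj, hbj⟩ := hmem (.inr b)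
  have := (hside i hi _ hai).trans (hside j hj _ hbj).symm
  simp at this

end UpperBound

section CoveringChain
variable {X : Type*} {R : Set X → Set X → Prop} {S T U A B : Set X}

def CoveringChain (R : Set X → Set X → Prop) (S T A : Set X) : Prop :=
  ∃ (k : ℕ) (f : ℕ → Set X), f 0 = S ∧ f k = T ∧ (∀ i < k, R (f i) (f (i + 1))) ∧
    A ⊆ ⋃ i ∈ Iic k, f i

lemma CoveringChain.refl (R : Set X → Set X → Prop) (S : Set X) : CoveringChain R S S S :=
  ⟨0, fun _ => S, rfl, rfl, by simp, by simp⟩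

lemma CoveringChain.mono (h : CoveringChain R S T A) (hBA : B ⊆ A) : CoveringChain R S T B :=
  let ⟨k, f, h0, hk, hR, hA⟩ := h
  ⟨k, f, h0, hk, hR, hBA.trans hA⟩

lemma CoveringChain.union_target (h : CoveringChain R S T A) : CoveringChain R S T (A ∪ T) := by
  obtain ⟨k, f, h0, rfl, hR, hA⟩ := h
  exact ⟨k, f, h0, rfl, hR, union_subset hA (subset_biUnion_of_mem (u := f) self_mem_Iic)⟩

lemma CoveringChain.snoc (h : CoveringChain R S T A) (hTU : R T U) :
    CoveringChain R S U (A ∪ U) := by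
  obtain ⟨k, f, h0, hk, hR, hA⟩ := h
  refine ⟨k + 1, fun i => if i ≤ k then f i else U, by simp [h0], by simp, ?_, ?_⟩
  · intro i hi
    obtain hi | rfl := (Nat.lt_succ_iff.mp hi).lt_or_eq
    · simpa [hi.le, Nat.succ_le_of_lt hi] using hR i hi
    · simpa [hk] using hTU
  · rintro x (hx | hx)
    · obtain ⟨i, hi, hxi⟩ := mem_iUnion₂.mp (hA hx)
      exact mem_iUnion₂.mpr ⟨i, by simp at hi ⊢; omega, by simpa [show i ≤ k from hi] using hxi⟩
    · exact mem_iUnion₂.mpr ⟨k + 1, by simp, by simpa using hx⟩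

lemma CoveringChain.trans_reflTransGen (h : CoveringChain R S T A) (hTU : ReflTransGen R T U) :
    CoveringChain R S U (A ∪ U) := by
  induction hTU with
  | refl => exact h.union_target
  | tail _ hVU ih => exact (ih.snoc hVU).mono (union_subset_union_left _ subset_union_left)

-- Visit the targets one at a time, returning to `S` after each one.
lemma coveringChain_univ_of_forall_reflTransGen [Finite X] [Std.Symm R]
    (h : ∀ x, ∃ T, ReflTransGen R S T ∧ x ∈ T) : CoveringChain R S S univ := by
  classical
  have := Fintype.ofFinite X
  suffices ∀ s : Finset X, CoveringChain R S S s by simpa using this Finset.univ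
  intro s
  induction s using Finset.induction_on with
  | empty => exact (CoveringChain.refl R S).mono (by simp)
  | insert x s _ ih =>
    obtain ⟨T, hST, hxT⟩ := h x
    refine ((ih.trans_reflTransGen hST).trans_reflTransGen (Std.Symm.symm _ _ hST)).mono ?_
    intro y hy
    simp only [Finset.coe_insert, mem_insert_iff] at hy
    rcases hy with rfl | hy
    · exact Or.inl (Or.inr hxT)
    · exact Or.inl (Or.inl hy)

end CoveringChain

lemma isMobileGPSet_of_forall_reflTransGen {V : Type*} [Finite V] {J : SimpleGraph V}
    {S : Set V} (hS : IsGPSet J S) (h : ∀ x, ∃ T, ReflTransGen (LegalMove J) S T ∧ x ∈ T) :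
    IsMobileGPSet J S :=
  let ⟨k, f, h0, _, hR, hcover⟩ :=
    coveringChain_univ_of_forall_reflTransGen h
  ⟨hS, k, f, h0, hR, univ_subset_iff.mp hcover⟩

section Triples
variable {V : Type*} {J : SimpleGraph V} {p q u v : V}

lemma legalMove_triple (hS : IsGPSet J {p, q, u}) (hT : IsGPSet J {p, q, v}) (huv : J.Adj u v)
    (hup : u ≠ p) (huq : u ≠ q) (hvp : v ≠ p) (hvq : v ≠ q) :
    LegalMove J {p, q, u} {p, q, v} := by
  refine ⟨hS, u, by simp, v, by simp [hvp, hvq, huv.ne.symm], huv, ?_, hT⟩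
  ext x
  by_cases hxu : x = u <;> simp_all [or_comm, or_left_comm]

lemma isGPSet_triple_of_not_adj (hJ : J.ediam ≤ 2) {r : V} (hpq : J.Adj p q)
    (hpr : ¬J.Adj p r) (hqr : ¬J.Adj q r) : IsGPSet J {p, q, r} := by
  refine isGPSet_of_ediam_le_two hJ fun x hx y hy w hw hxy hxw hwy => ?_
  simp only [mem_insert_iff, mem_singleton_iff] at hx hy hw
  rcases hx with rfl | rfl | rfl <;> rcases hy with rfl | rfl | rfl <;>
    rcases hw with rfl | rfl | rfl <;> simp_all [J.adj_comm]

end Triples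

lemma reflTransGen_legalMove_of_reachable {V W : Type*} {J : SimpleGraph V}
    {K : SimpleGraph W} (e : K ↪g J) {p q : V} (hpq : J.Adj p q) (hp : ∀ w, J.Adj p (e w))
    (hq : ∀ w, J.Adj q (e w)) {w₁ w₂ : W} (h : K.Reachable w₁ w₂) :
    ReflTransGen (LegalMove J) {p, q, e w₁} {p, q, e w₂} := by
  have hgp : ∀ w, IsGPSet J {p, q, e w} := fun w => IsClique.isGPSet <| by
    simp [isClique_insert, hpq, hp, hq, (hp w).ne, (hq w).ne]
  rw [reachable_iff_reflTransGen] at h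
  induction h with
  | refl => rfl
  | tail _ hw ih =>
    exact ih.tail <| legalMove_triple (hgp _) (hgp _) (e.map_adj_iff.mpr hw) (hp _).ne'
      (hq _).ne' (hp _).ne' (hq _).ne'

lemma legalMove_of_not_reachable {V W : Type*} {J : SimpleGraph V} {K : SimpleGraph W}
    (hJ : J.ediam ≤ 2) (e : K ↪g J) {k₁ k₂ k : W} {u : V} (hk : K.Adj k₁ k₂)
    (hu : ∀ w, J.Adj u (e w)) (hk₁k : ¬K.Reachable k₁ k) :
    LegalMove J {e k₁, e k₂, u} {e k₁, e k₂, e k} := by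
  have hk₂k : ¬K.Reachable k₂ k := fun h => hk₁k (hk.reachable.trans h)
  refine legalMove_triple (IsClique.isGPSet ?_) (isGPSet_triple_of_not_adj hJ ?_ ?_ ?_) (hu k)
    (hu k₁).ne (hu k₂).ne (e.injective.ne ?_) (e.injective.ne ?_)
  · simp [isClique_insert, hk, hk.ne, (hu k₁).symm, (hu k₂).symm, (hu k₁).ne', (hu k₂).ne']
  · exact e.map_adj_iff.mpr hk
  · exact fun h => hk₁k (e.map_adj_iff.mp h).reachable
  · exact fun h => hk₂k (e.map_adj_iff.mp h).reachable
  · rintro rfl; exact hk₁k .rfl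
  · rintro rfl; exact hk₂k .rfl

section LowerBound
variable {α β : Type*} {G : SimpleGraph α} {H : SimpleGraph β} {a b : α} {c d : β}

lemma legalMove_joinGraph_inl_to_inr (hab : G.Adj a b) (hcd : H.Adj c d) :
    LegalMove (joinGraph G H) {.inl a, .inl b, .inr c} {.inr c, .inr d, .inl b} := by
  have hrot (x y z : α ⊕ β) : ({x, y, z} : Set (α ⊕ β)) = {y, z, x} := by
    rw [insert_comm, pair_comm]
  rw [hrot (.inl a), ← hrot (.inl b)]
  refine legalMove_triple (IsClique.isGPSet ?_) (IsClique.isGPSet ?_) (by simp)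
    (by simp [hab.ne]) (by simp) (by simp) (by simp [hcd.ne'])
  · simp [isClique_insert, hab.symm]
  · simp [isClique_insert, hcd]

lemma exists_reflTransGen_legalMove_mem (hab : G.Adj a b) (hcd : H.Adj c d) (x : α ⊕ β) :
    ∃ T, ReflTransGen (LegalMove (joinGraph G H)) {.inl a, .inl b, .inr c} T ∧ x ∈ T := by
  have : Nonempty α := ⟨a⟩
  have : Nonempty β := ⟨c⟩
  have hpivot := ReflTransGen.single (legalMove_joinGraph_inl_to_inr hab hcd)
  rcases x with x | y
  · by_cases hbx : G.Reachable b x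
    · exact ⟨_, hpivot.trans <| reflTransGen_legalMove_of_reachable Embedding.joinInl
        (by simpa using hcd) (fun _ => by simp) (fun _ => by simp) hbx, by simp⟩
    · exact ⟨_, .single <| legalMove_of_not_reachable joinGraph_ediam_le_two Embedding.joinInl
        hab (fun _ => by simp) fun h => hbx (hab.symm.reachable.trans h), by simp⟩
  · by_cases hcy : H.Reachable c y
    · exact ⟨_, reflTransGen_legalMove_of_reachable Embedding.joinInr (by simpa using hab)
        (fun _ => by simp) (fun _ => by simp) hcy, by simp⟩
    · exact ⟨_, hpivot.tail <| legalMove_of_not_reachable joinGraph_ediam_le_two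
        Embedding.joinInr hcd (fun _ => by simp) hcy, by simp⟩

end LowerBound

lemma isMobileGPSet_joinGraph_of_adj {α β : Type*} [Finite α] [Finite β] {G : SimpleGraph α}
    {H : SimpleGraph β} {a b : α} {c d : β} (hab : G.Adj a b) (hcd : H.Adj c d) :
    IsMobileGPSet (joinGraph G H) {.inl a, .inl b, .inr c} := by
  refine isMobileGPSet_of_forall_reflTransGen (IsClique.isGPSet ?_)
    (exists_reflTransGen_legalMove_mem hab hcd)
  simp [isClique_insert, hab]

theorem mob_join_cliqueNum_two {α β : Type*} [Finite α] [Finite β]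
    (G : SimpleGraph α) (H : SimpleGraph β)
    (hG : G.cliqueNum = 2) (hH : H.cliqueNum = 2)
    (hnot : ¬(G = ⊤ ∧ H = ⊤)) :
    mob (joinGraph G H) = 3 := by
  obtain ⟨a, b, hab⟩ := G.exists_adj_of_one_lt_cliqueNum (by omega)
  obtain ⟨c, d, hcd⟩ := H.exists_adj_of_one_lt_cliqueNum (by omega)
  refine IsGreatest.csSup_eq ⟨⟨_, isMobileGPSet_joinGraph_of_adj hab hcd, ?_⟩, ?_⟩
  · exact ncard_eq_three.mpr ⟨_, _, _, by simpa using hab.ne, by simp, by simp, rfl⟩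
  · rintro n ⟨S, hS, rfl⟩
    exact hS.ncard_le_three hG hH hnot
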